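/- Let x̄ ∈ X be a local minimum of problem (P) with radius r (so f(x̄) + (β/2)‖x̄‖² < f(y) + (β/2)‖y‖² for every y ∈ X ∩ closedBall(x̄, r) with y ≠ x̄), and let r_max satisfy 0 < r_max ≤ r. Then: (i) there exists μ_max > 0 such that for every μ ∈ (0, μ_max] the exterior-point minimization function f + ι̂_μ attains its minimum over closedBall(x̄, r_max), and every minimizer of f + ι̂_μ over closedBall(x̄, r_max) lies in the open ball B(x̄, r_max) (hence is a local minimizer of f + ι̂_μ); and (ii) whenever μ_k > 0 with μ_k → 0 and, for each k, x_k minimizes f + ι̂_{μ_k} over closedBall(x̄, r_max), one has x_k → x̄ and (f + ι̂_{μ_k})(x_k) → f(x̄) + (β/2)‖x̄‖². -/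

import Mathlib

/-!
Put `g = f + (β/2)‖·‖²`, so that the exterior-point objective is `g + d²/(2μ)`, which
decreases as `μ` grows. Comparing a minimizer `z_μ` over the compact ball `K` with `xbar` gives
`g z_μ + d(z_μ)²/(2μ) ≤ g xbar`. By monotonicity in `μ`, every cluster point `y` of `z_μ` as
`μ → 0⁺` satisfies `g y + d(y)²/(2ν) ≤ g xbar` for every `ν > 0`; hence `y ∈ X` and
`g y ≤ g xbar`, and the strict local minimality forces `y = xbar`. Compactness then gives
`z_μ → xbar`, which is (ii), and (i) follows because minimizers on the boundary sphere for
arbitrarily small `μ` would contradict it.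
-/

open Filter Metric Topology Set

section

variable {α ι : Type*} [PseudoMetricSpace α]

noncomputable def penalized (g : α → ℝ) (X : Set α) (μ : ℝ) (y : α) : ℝ :=
  g y + infDist y X ^ 2 / (2 * μ)

variable {g : α → ℝ} {X K : Set α} {μ ν c : ℝ} {y z x₀ : α}

theorem le_penalized (hμ : 0 ≤ μ) : g y ≤ penalized g X μ y :=
  le_add_of_nonneg_right (by positivity)

theorem penalized_of_mem (hy : y ∈ X) : penalized g X μ y = g y := by
  simp [penalized, infDist_zero_of_mem hy]

theorem penalized_anti (hμ : 0 < μ) (hμν : μ ≤ ν) : penalized g X ν y ≤ penalized g X μ y := by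
  unfold penalized; gcongr

theorem Continuous.penalized (hg : Continuous g) : Continuous (penalized g X μ) :=
  hg.add (((continuous_infDist_pt X).pow 2).div_const _)

theorem penalized_le_of_isMinOn (hx₀X : x₀ ∈ X) (hx₀K : x₀ ∈ K)
    (hz : IsMinOn (penalized g X μ) K z) : penalized g X μ z ≤ g x₀ :=
  (isMinOn_iff.1 hz x₀ hx₀K).trans_eq (penalized_of_mem hx₀X)

theorem mem_of_forall_penalized_le (hX : IsClosed X) (hXne : X.Nonempty)
    (h : ∀ μ > 0, penalized g X μ y ≤ c) : y ∈ X := by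
  rw [hX.mem_iff_infDist_zero hXne]
  by_contra hd
  have hd2 : 0 < infDist y X ^ 2 := pow_pos (infDist_nonneg.lt_of_ne' hd) 2
  have hgc : g y ≤ c := (le_penalized zero_le_one).trans (h 1 one_pos)
  -- with this `μ` the penalty term equals `c - g y + 1`
  have := h (infDist y X ^ 2 / (2 * (c - g y + 1))) (by positivity)
  unfold penalized at this
  field_simp at this
  linarith

theorem tendsto_of_penalized_le {l : Filter ι} {μ : ι → ℝ} {z : ι → α}
    (hK : IsCompact K) (hX : IsClosed X) (hg : Continuous g) (hx₀ : x₀ ∈ X)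
    (hstrict : ∀ y ∈ X ∩ K, y ≠ x₀ → g x₀ < g y) (hμ : Tendsto μ l (𝓝[>] 0))
    (hzK : ∀ i, z i ∈ K) (hz : ∀ i, penalized g X (μ i) (z i) ≤ g x₀) :
    Tendsto z l (𝓝 x₀) := by
  refine hK.tendsto_nhds_of_unique_mapClusterPt (.of_forall hzK) fun y hyK hy => ?_
  have hpen : ∀ ν > 0, penalized g X ν y ≤ g x₀ := fun ν hν =>
    (isClosed_le hg.penalized continuous_const).mem_of_mapClusterPt hy <|
      (hμ.eventually (Ioc_mem_nhdsGT hν)).mono fun i hi =>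
        (penalized_anti hi.1 hi.2).trans (hz i)
  have hyX : y ∈ X := mem_of_forall_penalized_le hX ⟨x₀, hx₀⟩ hpen
  by_contra hne
  exact (hstrict y ⟨hyX, hyK⟩ hne).not_ge ((le_penalized zero_le_one).trans (hpen 1 one_pos))

theorem tendsto_penalized_of_penalized_le {l : Filter ι} {μ : ι → ℝ} {z : ι → α}
    (hg : Continuous g) (hμ : ∀ i, 0 ≤ μ i) (hzx₀ : Tendsto z l (𝓝 x₀))
    (hz : ∀ i, penalized g X (μ i) (z i) ≤ g x₀) :
    Tendsto (fun i => penalized g X (μ i) (z i)) l (𝓝 (g x₀)) :=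
  tendsto_of_tendsto_of_tendsto_of_le_of_le ((hg.tendsto x₀).comp hzx₀) tendsto_const_nhds
    (fun i => le_penalized (X := X) (hμ i)) hz

theorem exists_forall_isMinOn_penalized_mem {U : Set α} (hU : U ∈ 𝓝 x₀)
    (hK : IsCompact K) (hX : IsClosed X) (hg : Continuous g) (hx₀X : x₀ ∈ X) (hx₀K : x₀ ∈ K)
    (hstrict : ∀ y ∈ X ∩ K, y ≠ x₀ → g x₀ < g y) :
    ∃ μmax > 0, ∀ μ, 0 < μ → μ ≤ μmax →
      ∀ z ∈ K, IsMinOn (penalized g X μ) K z → z ∈ U := by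
  by_contra! h
  choose μ hμpos hμle z hzK hzmin hzU using fun n : ℕ => h (1 / (n + 1)) (by positivity)
  have hμ : Tendsto μ atTop (𝓝[>] 0) :=
    tendsto_nhdsWithin_iff.2 ⟨squeeze_zero (fun n => (hμpos n).le) hμle
      tendsto_one_div_add_atTop_nhds_zero_nat, .of_forall hμpos⟩
  have hz := tendsto_of_penalized_le hK hX hg hx₀X hstrict hμ hzK
    fun n => penalized_le_of_isMinOn hx₀X hx₀K (hzmin n)
  obtain ⟨n, hn⟩ := (hz.eventually hU).exists
  exact hzU n hn

end

theorem nexos_attainment_of_local_min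
    {E : Type*} [NormedAddCommGroup E] [InnerProductSpace ℝ E] [FiniteDimensional ℝ E]
    (X : Set E) (hXcl : IsClosed X)
    (f : E → ℝ) (hconv : ConvexOn ℝ Set.univ f)
    (β : ℝ)
    (xbar : E) (hxbarX : xbar ∈ X)
    -- `xbar` is a local minimum of (P) with radius `r`
    (r : ℝ)
    (hlocmin : ∀ y ∈ X ∩ Metric.closedBall xbar r, y ≠ xbar →
      f xbar + β / 2 * ‖xbar‖ ^ 2 < f y + β / 2 * ‖y‖ ^ 2)
    (rmax : ℝ) (hrmax : 0 < rmax) (hrmaxr : rmax ≤ r) :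
    -- (i)
    (∃ μmax > (0 : ℝ), ∀ μ : ℝ, 0 < μ → μ ≤ μmax →
      (∃ z ∈ Metric.closedBall xbar rmax,
        IsMinOn (fun y => f y + (Metric.infDist y X) ^ 2 / (2 * μ) + β / 2 * ‖y‖ ^ 2)
          (Metric.closedBall xbar rmax) z) ∧
      (∀ z ∈ Metric.closedBall xbar rmax,
        IsMinOn (fun y => f y + (Metric.infDist y X) ^ 2 / (2 * μ) + β / 2 * ‖y‖ ^ 2)
          (Metric.closedBall xbar rmax) z → z ∈ Metric.ball xbar rmax)) ∧
    -- (ii)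
    (∀ (μ : ℕ → ℝ) (x : ℕ → E),
      (∀ k, 0 < μ k) →
      Filter.Tendsto μ Filter.atTop (nhds 0) →
      (∀ k, x k ∈ Metric.closedBall xbar rmax) →
      (∀ k, IsMinOn (fun y => f y + (Metric.infDist y X) ^ 2 / (2 * μ k) + β / 2 * ‖y‖ ^ 2)
        (Metric.closedBall xbar rmax) (x k)) →
      Filter.Tendsto x Filter.atTop (nhds xbar) ∧
      Filter.Tendsto
        (fun k => f (x k) + (Metric.infDist (x k) X) ^ 2 / (2 * μ k) + β / 2 * ‖x k‖ ^ 2)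
        Filter.atTop (nhds (f xbar + β / 2 * ‖xbar‖ ^ 2))) := by
  set K := closedBall xbar rmax
  set g : E → ℝ := fun y => f y + β / 2 * ‖y‖ ^ 2
  have hpen : ∀ μ y, f y + infDist y X ^ 2 / (2 * μ) + β / 2 * ‖y‖ ^ 2 = penalized g X μ y :=
    fun μ y => by simp only [penalized, g]; ring
  have hg : Continuous g :=
    (continuousOn_univ.1 (hconv.continuousOn isOpen_univ)).add (by fun_prop)
  have hK : IsCompact K := isCompact_closedBall xbar rmax
  have hxbarK : xbar ∈ K := mem_closedBall_self hrmax.le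
  have hstrict : ∀ y ∈ X ∩ K, y ≠ xbar → g xbar < g y := fun y hy =>
    hlocmin y ⟨hy.1, closedBall_subset_closedBall hrmaxr hy.2⟩
  simp only [hpen]
  refine ⟨?_, fun μ x hμpos hμ hxK hxmin => ?_⟩
  · obtain ⟨μmax, hμmax, hmem⟩ := exists_forall_isMinOn_penalized_mem (ball_mem_nhds xbar hrmax)
      hK hXcl hg hxbarX hxbarK hstrict
    exact ⟨μmax, hμmax, fun μ hμ hμle =>
      ⟨hK.exists_isMinOn ⟨xbar, hxbarK⟩ hg.penalized.continuousOn, hmem μ hμ hμle⟩⟩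
  · have hle := fun k => penalized_le_of_isMinOn hxbarX hxbarK (hxmin k)
    have hx := tendsto_of_penalized_le hK hXcl hg hxbarX hstrict
      (tendsto_nhdsWithin_iff.2 ⟨hμ, .of_forall hμpos⟩) hxK hle
    exact ⟨hx, tendsto_penalized_of_penalized_le hg (fun k => (hμpos k).le) hx hle⟩
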